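/- arXiv:2510.17978 — 3 statements merged into one kernel-verified Lean document; each statement's English description precedes it below -/
import Mathlib

section
/- The backward shift operator S⁻ on n qubits, defined as the 2ⁿ×2ⁿ matrix with entries S⁻[k-1,k]=1 for 1≤k≤2ⁿ-1 and zero elsewhere, equals the sum over j from 1 to n of I^⊗(n-j) ⊗ σ₀₁ ⊗ σ₁₀^⊗(j-1), where σ₀₁=|0⟩⟨1| and σ₁₀=|1⟩⟨0|. -/
open Matrix Complex

noncomputable section

lemma tens_bpos {a b : ℕ} (i : Fin (a * b)) : 0 < b :=
  Nat.pos_of_ne_zero fun h => absurd i.isLt (by simp [h])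

/-- Kronecker (tensor) product of square matrices, with the leftmost factor acting on
the most significant part of the index. -/
def tens {a b : ℕ} (A : Matrix (Fin a) (Fin a) ℂ) (B : Matrix (Fin b) (Fin b) ℂ) :
    Matrix (Fin (a * b)) (Fin (a * b)) ℂ := fun i j =>
  A ⟨i.val / b, Nat.div_lt_of_lt_mul (i.isLt.trans_eq (Nat.mul_comm a b))⟩
      ⟨j.val / b, Nat.div_lt_of_lt_mul (j.isLt.trans_eq (Nat.mul_comm a b))⟩ *
    B ⟨i.val % b, Nat.mod_lt _ (tens_bpos i)⟩ ⟨j.val % b, Nat.mod_lt _ (tens_bpos j)⟩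

def I2 : Matrix (Fin 2) (Fin 2) ℂ := 1
def s00 : Matrix (Fin 2) (Fin 2) ℂ := !![1, 0; 0, 0]
def s01 : Matrix (Fin 2) (Fin 2) ℂ := !![0, 1; 0, 0]
def s10 : Matrix (Fin 2) (Fin 2) ℂ := !![0, 0; 1, 0]
def s11 : Matrix (Fin 2) (Fin 2) ℂ := !![0, 0; 0, 1]
def pauliX : Matrix (Fin 2) (Fin 2) ℂ := !![0, 1; 1, 0]
def pauliZ : Matrix (Fin 2) (Fin 2) ℂ := !![1, 0; 0, -1]

/-- `k`-fold tensor power of a one-qubit operator. -/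
def tensPow (M : Matrix (Fin 2) (Fin 2) ℂ) : (k : ℕ) → Matrix (Fin (2 ^ k)) (Fin (2 ^ k)) ℂ
  | 0 => 1
  | k + 1 => tens (tensPow M k) M

lemma pow_split {n j : ℕ} (h1 : 1 ≤ j) (h2 : j ≤ n) :
    2 ^ (n - j) * 2 * 2 ^ (j - 1) = 2 ^ n := by
  rw [mul_assoc, ← pow_succ', ← pow_add]; congr 1; omega

lemma two_pow_split {j : ℕ} (h : 1 ≤ j) : 2 * 2 ^ (j - 1) = 2 ^ j := by
  rw [← pow_succ']; congr 1; omega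

/-- The backward shift operator `S⁻` : entries `S⁻[k-1,k] = 1`. -/
def Sminus (n : ℕ) : Matrix (Fin (2 ^ n)) (Fin (2 ^ n)) ℂ := fun i j =>
  if i.val + 1 = j.val then 1 else 0

/-- The forward shift operator `S⁺` : entries `S⁺[k,k-1] = 1`. -/
def Splus (n : ℕ) : Matrix (Fin (2 ^ n)) (Fin (2 ^ n)) ℂ := fun i j =>
  if j.val + 1 = i.val then 1 else 0

/-- `A_j = i·I^⊗(n-j) ⊗ (σ₀₁ ⊗ σ₁₀^⊗(j-1) − σ₁₀ ⊗ σ₀₁^⊗(j-1))` acting on `(ℂ²)^⊗n`. -/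
def Amat (n j : ℕ) : Matrix (Fin (2 ^ n)) (Fin (2 ^ n)) ℂ :=
  if h : 1 ≤ j ∧ j ≤ n then
    Complex.I • (Matrix.reindex (finCongr (pow_split h.1 h.2)) (finCongr (pow_split h.1 h.2))
      (tens (tens (tensPow I2 (n - j)) s01) (tensPow s10 (j - 1)) -
        tens (tens (tensPow I2 (n - j)) s10) (tensPow s01 (j - 1))))
  else 0

/-- Spectral (operator) norm of a square complex matrix. -/
def specNorm {m : ℕ} (M : Matrix (Fin m) (Fin m) ℂ) : ℝ :=
  ‖Matrix.toEuclideanCLM (𝕜 := ℂ) M‖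


lemma my_ite_mul {P Q : Prop} [Decidable P] [Decidable Q] :
    (if P then (1:ℂ) else 0) * (if Q then 1 else 0) = if P ∧ Q then 1 else 0 := by
  rcases Decidable.em P with h | h <;> rcases Decidable.em Q with h' | h' <;> simp [h, h']

lemma s01_apply (a b : Fin 2) : s01 a b = if (a : ℕ) = 0 ∧ (b : ℕ) = 1 then 1 else 0 := by
  fin_cases a <;> fin_cases b <;> simp [s01]

lemma tensPow_I2_apply : ∀ k (a b : Fin (2 ^ k)),
    tensPow I2 k a b = if (a : ℕ) = (b : ℕ) then 1 else 0
  | 0, a, b => by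
      have h1 := a.isLt; have h2 := b.isLt
      have hab : a = b := Fin.ext (by omega)
      subst hab
      simp [tensPow, Matrix.one_apply]
  | k + 1, a, b => by
      show tens (tensPow I2 k) I2 a b = _
      simp only [tens]; rw [tensPow_I2_apply k]
      have h2 : ∀ x y : Fin 2, I2 x y = if (x : ℕ) = (y : ℕ) then 1 else 0 := by
        intro x y; fin_cases x <;> fin_cases y <;> simp [I2, Matrix.one_apply]
      rw [h2, my_ite_mul]
      refine if_congr ?_ rfl rfl
      simp only [Fin.val_mk]
      omega

lemma tensPow_s10_apply : ∀ k (a b : Fin (2 ^ k)),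
    tensPow s10 k a b = if (a : ℕ) = 2 ^ k - 1 ∧ (b : ℕ) = 0 then 1 else 0
  | 0, a, b => by
      have h1 := a.isLt; have h2 := b.isLt
      have hab : a = b := Fin.ext (by omega)
      subst hab
      have ha : (a : ℕ) = 0 := by omega
      simp [tensPow, Matrix.one_apply, ha]
  | k + 1, a, b => by
      show tens (tensPow s10 k) s10 a b = _
      simp only [tens]; rw [tensPow_s10_apply k]
      have h2 : ∀ x y : Fin 2, s10 x y = if (x : ℕ) = 1 ∧ (y : ℕ) = 0 then 1 else 0 := by
        intro x y; fin_cases x <;> fin_cases y <;> simp [s10]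
      rw [h2, my_ite_mul]
      refine if_congr ?_ rfl rfl
      simp only [Fin.val_mk]
      have hpow : (2:ℕ) ^ (k + 1) = 2 * 2 ^ k := by ring
      have hk : 0 < 2 ^ k := Nat.two_pow_pos k
      omega

/-- key arithmetic equivalence -/
lemma key (p : ℕ) (hp : 0 < p) (i k : ℕ) :
    (i / p / 2 = k / p / 2 ∧ (i / p % 2 = 0 ∧ k / p % 2 = 1) ∧
      i % p = p - 1 ∧ k % p = 0) ↔ (i + 1 = k ∧ k % (2 * p) = p) := by
  have h2p : 0 < 2 * p := by omega
  constructor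
  · rintro ⟨hq, ⟨hi2, hk2⟩, hi1, hk1⟩
    have ei := Nat.div_add_mod i p      -- p * (i/p) + i%p = i
    have ek := Nat.div_add_mod k p
    have h5 : k / p = i / p + 1 := by omega
    have h6 : p * (k / p) = p * (i / p) + p := by rw [h5, Nat.mul_add, Nat.mul_one]
    refine ⟨by omega, ?_⟩
    have h7 : k / p = 2 * (k / p / 2) + 1 := by omega
    have h8' : p * (k / p) = p * (2 * (k / p / 2) + 1) := by rw [← h7]
    have h8 : k = p * (2 * (k / p / 2) + 1) := by omega
    have h9 : p * (2 * (k / p / 2) + 1) = 2 * p * (k / p / 2) + p := by ring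
    rw [h8, h9, Nat.mul_add_mod]
    exact Nat.mod_eq_of_lt (by omega)
  · rintro ⟨hik, hm⟩
    obtain ⟨q, hq⟩ : ∃ q, k = 2 * p * q + p :=
      ⟨k / (2 * p), by have := Nat.div_add_mod k (2 * p); omega⟩
    have hi : i = 2 * p * q + (p - 1) := by omega
    have hkd : k / (2 * p) = q := by
      rw [hq, Nat.mul_add_div h2p, Nat.div_eq_of_lt (by omega), Nat.add_zero]
    have hid : i / (2 * p) = q := by
      rw [hi, Nat.mul_add_div h2p, Nat.div_eq_of_lt (by omega), Nat.add_zero]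
    have him : i % (2 * p) = p - 1 := by
      rw [hi, Nat.mul_add_mod]; exact Nat.mod_eq_of_lt (by omega)
    have hdd : ∀ m : ℕ, m / p / 2 = m / (2 * p) := by
      intro m; rw [Nat.div_div_eq_div_mul, Nat.mul_comm]
    have hdm : ∀ m : ℕ, m / p % 2 = m % (p * 2) / p := fun m => (Nat.mod_mul_right_div_self m p 2).symm
    have hmm : ∀ m : ℕ, m % (2 * p) % p = m % p := fun m => Nat.mod_mod_of_dvd m ⟨2, by ring⟩
    have hp2 : p * 2 = 2 * p := Nat.mul_comm p 2
    refine ⟨by rw [hdd, hdd, hid, hkd], ⟨?_, ?_⟩, ?_, ?_⟩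
    · rw [hdm, hp2, him]; exact Nat.div_eq_of_lt (by omega)
    · rw [hdm, hp2, hm]; exact Nat.div_self hp
    · rw [← hmm, him]; exact Nat.mod_eq_of_lt (by omega)
    · rw [← hmm, hm]; exact Nat.mod_self p

lemma exists_j (n k : ℕ) (hk : 0 < k) (hkn : k < 2 ^ n) :
    ∃ j : Fin n, k % (2 * 2 ^ (j : ℕ)) = 2 ^ (j : ℕ) := by
  haveI : Fact (Nat.Prime 2) := ⟨Nat.prime_two⟩
  set j := padicValNat 2 k with hj
  have h1 : 2 ^ j ∣ k := pow_padicValNat_dvd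
  have h2 : ¬ 2 ^ (j + 1) ∣ k := pow_succ_padicValNat_not_dvd hk.ne'
  obtain ⟨c, hc⟩ := h1
  have hodd : c % 2 = 1 := by
    rcases Nat.mod_two_eq_zero_or_one c with h | h
    · exfalso; apply h2
      obtain ⟨d, hd⟩ := Nat.dvd_of_mod_eq_zero h
      exact ⟨d, by rw [hc, hd]; ring⟩
    · exact h
  have hjn : j < n := by
    have h3 : 2 ^ j ≤ k := Nat.le_of_dvd hk ⟨c, hc⟩
    have h4 : 2 ^ j < 2 ^ n := lt_of_le_of_lt h3 hkn
    exact (Nat.pow_lt_pow_iff_right (by norm_num)).mp h4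
  refine ⟨⟨j, hjn⟩, ?_⟩
  have hc2 : k = 2 * 2 ^ j * (c / 2) + 2 ^ j := by
    have h6 : c = 2 * (c / 2) + 1 := by omega
    have h7 : k = 2 ^ j * (2 * (c / 2) + 1) := by rw [hc]; exact congrArg _ h6
    rw [h7]; ring
  rw [hc2, Nat.mul_add_mod]
  have hp : 0 < 2 ^ j := Nat.two_pow_pos j
  exact Nat.mod_eq_of_lt (by omega)

lemma uniq_j (k j j' : ℕ) (h : k % (2 * 2 ^ j) = 2 ^ j) (h' : k % (2 * 2 ^ j') = 2 ^ j') :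
    j = j' := by
  by_contra hne
  wlog hlt : j < j' generalizing j j'
  · exact this j' j h' h (Ne.symm hne) (by omega)
  · have hd' : 2 ^ j' ∣ k := by
      apply Nat.dvd_of_mod_eq_zero
      rw [← Nat.mod_mod_of_dvd k (⟨2, by ring⟩ : (2:ℕ) ^ j' ∣ 2 * 2 ^ j'), h', Nat.mod_self]
    have hd : 2 ^ (j + 1) ∣ k := dvd_trans (pow_dvd_pow 2 (by omega)) hd'
    obtain ⟨d, hd2⟩ := hd
    have hz : k % (2 * 2 ^ j) = 0 := by
      rw [hd2, pow_succ, show 2 ^ j * 2 * d = 2 * 2 ^ j * d by ring]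
      exact Nat.mul_mod_right _ _
    have hp : 0 < 2 ^ j := Nat.two_pow_pos j
    omega

/-- the backward shift operator `S⁻` on `n` qubits equals
`∑_{j=1}^n I^⊗(n-j) ⊗ σ₀₁ ⊗ σ₁₀^⊗(j-1)`. -/
theorem shift_minus_decomposition (n : ℕ) (hn : 1 ≤ n) :
    Sminus n = ∑ j : Fin n,
      Matrix.reindex (finCongr (pow_split (n := n) (j := j.val + 1) (Nat.le_add_left 1 j.val) j.isLt))
        (finCongr (pow_split (n := n) (j := j.val + 1) (Nat.le_add_left 1 j.val) j.isLt))
        (tens (tens (tensPow I2 (n - (j.val + 1))) s01) (tensPow s10 j.val)) := by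
  ext i k
  rw [Matrix.sum_apply]
  simp only [Matrix.reindex_apply, Matrix.submatrix_apply, finCongr_symm, finCongr_apply,
    Fin.coe_cast, tens, tensPow_I2_apply, s01_apply, tensPow_s10_apply, Fin.val_mk,
    my_ite_mul, Nat.add_sub_cancel]
  have step : ∀ j : Fin n,
      (if ((i : ℕ) / 2 ^ (j:ℕ) / 2 = (k : ℕ) / 2 ^ (j:ℕ) / 2 ∧
            (i : ℕ) / 2 ^ (j:ℕ) % 2 = 0 ∧ (k : ℕ) / 2 ^ (j:ℕ) % 2 = 1) ∧
          (i : ℕ) % 2 ^ (j:ℕ) = 2 ^ (j:ℕ) - 1 ∧ (k : ℕ) % 2 ^ (j:ℕ) = 0 then (1:ℂ) else 0)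
      = if ((i:ℕ) + 1 = (k:ℕ) ∧ (k:ℕ) % (2 * 2 ^ (j:ℕ)) = 2 ^ (j:ℕ)) then 1 else 0 := by
    intro j
    refine if_congr ?_ rfl rfl
    have hkey := key (2 ^ (j:ℕ)) (Nat.two_pow_pos _) (i:ℕ) (k:ℕ)
    tauto
  rw [Finset.sum_congr rfl (fun j _ => step j)]
  unfold Sminus
  by_cases h : (i : ℕ) + 1 = (k : ℕ)
  · rw [if_pos h]
    obtain ⟨j0, hj0⟩ := exists_j n (k : ℕ) (by omega) k.isLt
    rw [Fintype.sum_eq_single j0 (fun x hx => by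
      rw [if_neg]
      rintro ⟨-, hc⟩
      exact hx (Fin.ext (uniq_j (k:ℕ) _ _ hc hj0))), if_pos ⟨h, hj0⟩]
  · rw [if_neg h]
    symm
    exact Finset.sum_eq_zero fun j _ => by simp [h]

end
end

section
/- The matrix A_j = i·I^⊗(n-j) ⊗ (σ₀₁ ⊗ σ₁₀^⊗(j-1) − σ₁₀ ⊗ σ₀₁^⊗(j-1)) is Hermitian and satisfies A_j³ = A_j; in particular its spectrum is contained in {−1, 0, 1} and ‖A_j‖ ≤ 1. -/
open Matrix Complex

noncomputable section

-- ### auxiliary lemmas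

lemma tens_eq_reindex {a b : ℕ} (A : Matrix (Fin a) (Fin a) ℂ) (B : Matrix (Fin b) (Fin b) ℂ) :
    tens A B = Matrix.reindex finProdFinEquiv finProdFinEquiv
      (Matrix.kroneckerMap (· * ·) A B) := by
  ext i j
  simp only [Matrix.reindex_apply, Matrix.submatrix_apply, finProdFinEquiv_symm_apply,
    Matrix.kroneckerMap_apply, tens]
  rfl

lemma tens_mul {a b : ℕ} (A A' : Matrix (Fin a) (Fin a) ℂ) (B B' : Matrix (Fin b) (Fin b) ℂ) :
    tens A B * tens A' B' = tens (A * A') (B * B') := by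
  have h := (Matrix.reindexAlgEquiv ℂ ℂ (finProdFinEquiv (m := a) (n := b))).map_mul
      (Matrix.kroneckerMap (· * ·) A B) (Matrix.kroneckerMap (· * ·) A' B')
  simp only [Matrix.reindexAlgEquiv_apply] at h
  simp only [tens_eq_reindex]
  rw [show Matrix.kroneckerMap (· * ·) (A * A') (B * B') =
      Matrix.kroneckerMap (· * ·) A B * Matrix.kroneckerMap (· * ·) A' B' from
    Matrix.mul_kronecker_mul A A' B B']
  exact h.symm

lemma tens_one_one {a b : ℕ} : tens (1 : Matrix (Fin a) (Fin a) ℂ) (1 : Matrix (Fin b) (Fin b) ℂ) = 1 := by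
  have h := map_one (Matrix.reindexAlgEquiv ℂ ℂ (finProdFinEquiv (m := a) (n := b)))
  simp only [Matrix.reindexAlgEquiv_apply] at h
  rw [tens_eq_reindex, Matrix.one_kronecker_one]
  exact h

lemma tens_conjTranspose {a b : ℕ} (A : Matrix (Fin a) (Fin a) ℂ) (B : Matrix (Fin b) (Fin b) ℂ) :
    (tens A B)ᴴ = tens Aᴴ Bᴴ := by
  ext i j
  simp [tens, Matrix.conjTranspose_apply, mul_comm]

lemma tens_zero_left {a b : ℕ} (B : Matrix (Fin b) (Fin b) ℂ) :
    tens (0 : Matrix (Fin a) (Fin a) ℂ) B = 0 := by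
  ext i j; simp [tens]

lemma tens_zero_right {a b : ℕ} (A : Matrix (Fin a) (Fin a) ℂ) :
    tens A (0 : Matrix (Fin b) (Fin b) ℂ) = 0 := by
  ext i j; simp [tens]

lemma tensPow_mul (M N : Matrix (Fin 2) (Fin 2) ℂ) (k : ℕ) :
    tensPow M k * tensPow N k = tensPow (M * N) k := by
  induction k with
  | zero => simp [tensPow]
  | succ k ih =>
      have h := tens_mul (tensPow M k) (tensPow N k) M N
      rw [ih] at h
      exact h

lemma tensPow_conjTranspose (M : Matrix (Fin 2) (Fin 2) ℂ) (k : ℕ) :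
    (tensPow M k)ᴴ = tensPow Mᴴ k := by
  induction k with
  | zero => simp [tensPow]
  | succ k ih =>
      have h := tens_conjTranspose (tensPow M k) M
      rw [ih] at h
      exact h

lemma tensPow_one (k : ℕ) : tensPow I2 k = 1 := by
  induction k with
  | zero => rfl
  | succ k ih =>
      have h : tens (tensPow I2 k) I2 = 1 := by rw [ih, I2]; exact tens_one_one
      exact h

lemma s01_mul_s10 : s01 * s10 = s00 := by
  simp only [s01, s10, s00, Matrix.mul_fin_two]; norm_num

lemma s10_mul_s01 : s10 * s01 = s11 := by
  simp only [s01, s10, s11, Matrix.mul_fin_two]; norm_num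

lemma s01_mul_s01 : s01 * s01 = 0 := by
  simp only [s01, Matrix.mul_fin_two]; norm_num; ext i j; fin_cases i <;> fin_cases j <;> simp

lemma s10_mul_s10 : s10 * s10 = 0 := by
  simp only [s10, Matrix.mul_fin_two]; norm_num; ext i j; fin_cases i <;> fin_cases j <;> simp

lemma s00_mul_s01 : s00 * s01 = s01 := by
  simp only [s00, s01, Matrix.mul_fin_two]; norm_num

lemma s11_mul_s10 : s11 * s10 = s10 := by
  simp only [s11, s10, Matrix.mul_fin_two]; norm_num

lemma s01_ct : s01ᴴ = s10 := by
  ext i j; fin_cases i <;> fin_cases j <;> simp [s01, s10]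

lemma s10_ct : s10ᴴ = s01 := by
  ext i j; fin_cases i <;> fin_cases j <;> simp [s01, s10]

section core

variable (n j : ℕ)

/-- P = I^⊗(n-j) ⊗ σ₀₁ ⊗ σ₁₀^⊗(j-1). -/
def Pm : Matrix (Fin (2 ^ (n - j) * 2 * 2 ^ (j - 1))) (Fin (2 ^ (n - j) * 2 * 2 ^ (j - 1))) ℂ :=
  tens (tens (tensPow I2 (n - j)) s01) (tensPow s10 (j - 1))

def Qm : Matrix (Fin (2 ^ (n - j) * 2 * 2 ^ (j - 1))) (Fin (2 ^ (n - j) * 2 * 2 ^ (j - 1))) ℂ :=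
  tens (tens (tensPow I2 (n - j)) s10) (tensPow s01 (j - 1))

lemma Pm_ct : (Pm n j)ᴴ = Qm n j := by
  simp [Pm, Qm, tens_conjTranspose, tensPow_conjTranspose, s01_ct, s10_ct, I2,
    Matrix.conjTranspose_one]

lemma Pm_mul_Pm : Pm n j * Pm n j = 0 := by
  simp [Pm, tens_mul, s01_mul_s01, tens_zero_right, tens_zero_left]

lemma Qm_mul_Qm : Qm n j * Qm n j = 0 := by
  simp [Qm, tens_mul, s10_mul_s10, tens_zero_right, tens_zero_left]

lemma PQP : Pm n j * Qm n j * Pm n j = Pm n j := by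
  simp [Pm, Qm, tens_mul, tensPow_mul, tensPow_one, Matrix.mul_one, Matrix.one_mul,
    s01_mul_s10, s10_mul_s01, s00_mul_s01, s11_mul_s10]

lemma QPQ : Qm n j * Pm n j * Qm n j = Qm n j := by
  simp [Pm, Qm, tens_mul, tensPow_mul, tensPow_one, Matrix.mul_one, Matrix.one_mul,
    s01_mul_s10, s10_mul_s01, s00_mul_s01, s11_mul_s10]

lemma M_cube : (Pm n j - Qm n j) ^ 3 = -(Pm n j - Qm n j) := by
  have e1 := Pm_mul_Pm n j
  have e2 := Qm_mul_Qm n j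
  have e3 := PQP n j
  have e4 := QPQ n j
  have expand : (Pm n j - Qm n j) ^ 3 =
      Pm n j * Pm n j * Pm n j - Pm n j * Pm n j * Qm n j - Pm n j * Qm n j * Pm n j
        + Pm n j * Qm n j * Qm n j - Qm n j * Pm n j * Pm n j + Qm n j * Pm n j * Qm n j
        + Qm n j * Qm n j * Pm n j - Qm n j * Qm n j * Qm n j := by
    noncomm_ring
  rw [expand, e3, e4]
  rw [e1, e2]
  simp [mul_assoc, e1, e2]
  abel

end core

open scoped Matrix.Norms.L2Operator in
lemma specNorm_le_one_of_tripotent {m : ℕ} (A : Matrix (Fin m) (Fin m) ℂ)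
    (hh : A.IsHermitian) (h3 : A ^ 3 = A) : specNorm A ≤ 1 := by
  have hs : specNorm A = ‖A‖ := (Matrix.cstar_norm_def A).symm
  have h1 : ‖Aᴴ * A‖ = ‖A‖ * ‖A‖ := Matrix.l2_opNorm_conjTranspose_mul_self A
  have h2 : ‖(A ^ 2)ᴴ * A ^ 2‖ = ‖A ^ 2‖ * ‖A ^ 2‖ := Matrix.l2_opNorm_conjTranspose_mul_self _
  have hct2 : (A ^ 2)ᴴ = A ^ 2 := by rw [Matrix.conjTranspose_pow, hh.eq]
  have h4 : A ^ 2 * A ^ 2 = A ^ 2 := by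
    rw [← pow_add, show 2 + 2 = 3 + 1 from rfl, pow_succ, h3, ← pow_two]
  rw [hct2, h4] at h2
  have hAA : ‖A ^ 2‖ ≤ 1 := by nlinarith [norm_nonneg (A ^ 2)]
  have h1' : ‖A ^ 2‖ = ‖A‖ * ‖A‖ := by
    rw [pow_two]
    rw [hh.eq] at h1
    exact h1
  rw [hs]
  nlinarith [norm_nonneg A]

set_option maxHeartbeats 1000000 in
/-- `A_j` is Hermitian with `A_j³ = A_j`, spectrum in `{−1,0,1}` and `‖A_j‖ ≤ 1`. -/
theorem Amat_hermitian_tripotent (n j : ℕ) (h1 : 1 ≤ j) (h2 : j ≤ n) :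
    (Amat n j).IsHermitian ∧ Amat n j ^ 3 = Amat n j ∧
      spectrum ℂ (Amat n j) ⊆ {-1, 0, 1} ∧ specNorm (Amat n j) ≤ 1 := by
  have hA : Amat n j = Complex.I •
      (Matrix.reindexAlgEquiv ℂ ℂ (finCongr (pow_split h1 h2)) (Pm n j - Qm n j)) := by
    rw [Amat, dif_pos ⟨h1, h2⟩]; rfl
  have hQct : (Qm n j)ᴴ = Pm n j := by rw [← Pm_ct, Matrix.conjTranspose_conjTranspose]
  have hskew : (Pm n j - Qm n j)ᴴ = -(Pm n j - Qm n j) := by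
    rw [Matrix.conjTranspose_sub, Pm_ct, hQct]; abel
  have herm : (Amat n j).IsHermitian := by
    rw [hA]
    unfold Matrix.IsHermitian
    rw [Matrix.conjTranspose_smul, Matrix.reindexAlgEquiv_apply, Matrix.conjTranspose_reindex,
      hskew]
    simp only [Matrix.reindex_apply, Matrix.submatrix_neg, Pi.neg_apply, smul_neg,
      RCLike.star_def, Complex.conj_I, neg_smul, neg_neg]
  have cube : Amat n j ^ 3 = Amat n j := by
    rw [hA, smul_pow, ← map_pow, M_cube, map_neg]
    have hI : Complex.I ^ 3 = -Complex.I := by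
      rw [pow_succ, pow_two, Complex.I_mul_I]; ring
    rw [hI, neg_smul, smul_neg, neg_neg]
  refine ⟨herm, cube, ?_, ?_⟩
  · intro μ hμ
    have key : μ ^ 3 - μ ∈ spectrum ℂ ((Polynomial.aeval (Amat n j))
        (Polynomial.X ^ 3 - Polynomial.X : Polynomial ℂ)) := by
      apply spectrum.subset_polynomial_aeval
      exact ⟨μ, hμ, by simp⟩
    rw [map_sub, map_pow, Polynomial.aeval_X, cube, sub_self] at key
    rw [spectrum.zero_eq] at key
    have h0 : μ ^ 3 - μ = 0 := key
    have : μ * (μ - 1) * (μ + 1) = 0 := by ring_nf; linear_combination h0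
    rcases mul_eq_zero.1 this with h | h
    · rcases mul_eq_zero.1 h with h | h
      · right; left; exact h
      · right; right; simpa [sub_eq_zero] using h
    · left; simpa [add_eq_zero_iff_eq_neg] using h
  · exact specNorm_le_one_of_tripotent _ herm cube

end
end

section
/- For any Hermitian matrices H₁, …, H_m and τ ∈ ℝ, the first-order Trotter error satisfies ‖exp(−i(ΣH_j)τ) − ∏_j exp(−iH_jτ)‖ ≤ (τ²/2)·Σ_{j<j'} ‖[H_j, H_{j'}]‖. -/
set_option synthInstance.maxHeartbeats 1000000
set_option maxHeartbeats 1000000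


open Matrix Complex

noncomputable section

open NormedSpace in
section
open NormedSpace

abbrev OpA (N : ℕ) := EuclideanSpace ℂ (Fin N) →L[ℂ] EuclideanSpace ℂ (Fin N)
instance (N : ℕ) : ContinuousStar (OpA N) :=
  ⟨(ContinuousLinearMap.adjoint (𝕜 := ℂ) (E := EuclideanSpace ℂ (Fin N))
      (F := EuclideanSpace ℂ (Fin N))).continuous⟩
variable {N : ℕ}

lemma coe_real_smul (t : ℝ) (x : OpA N) : ((t : ℂ)) • x = t • x := by
  rw [← algebraMap_smul ℂ t x, Complex.coe_algebraMap]

lemma star_real_smul (t : ℝ) (x : OpA N) : star (t • x) = t • star x := by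
  rw [← coe_real_smul, star_smul, ← coe_real_smul]; norm_num

instance : SMulCommClass ℝ (OpA N) (OpA N) :=
  ⟨fun r a b => by simp only [smul_eq_mul, ← coe_real_smul, mul_smul_comm]⟩

instance : IsScalarTower ℝ (OpA N) (OpA N) :=
  ⟨fun r a b => by simp only [smul_eq_mul, ← coe_real_smul, smul_mul_assoc]⟩

lemma exp_skew_norm_le (x : OpA N) (hx : star x = -x) (t : ℝ) : ‖NormedSpace.exp (t • x)‖ ≤ 1 := by
  have h1 : star (NormedSpace.exp (t • x)) * NormedSpace.exp (t • x) = 1 := by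
    rw [star_exp, star_real_smul, hx]
    rw [show t • -x = -(t • x) from smul_neg t x, show NormedSpace.exp (-(t • x)) * NormedSpace.exp (t • x) = NormedSpace.exp (-(t • x) + t • x) from (NormedSpace.exp_add_of_commute_of_mem_ball (𝕂 := ℝ) (Commute.neg_left (Commute.refl (t • x))) ((NormedSpace.expSeries_radius_eq_top ℝ (OpA N)).symm ▸ edist_lt_top _ _) ((NormedSpace.expSeries_radius_eq_top ℝ (OpA N)).symm ▸ edist_lt_top _ _)).symm]
    simp [NormedSpace.exp_zero]
  have h2 : ‖NormedSpace.exp (t • x)‖ * ‖NormedSpace.exp (t • x)‖ = ‖(1 : OpA N)‖ := by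
    rw [← CStarRing.norm_star_mul_self, h1]
  have h3 : ‖(1 : OpA N)‖ ≤ 1 := by exact ContinuousLinearMap.norm_id_le
  nlinarith [norm_nonneg (NormedSpace.exp (t • x))]

/-- prefix product of exponentials -/
def trF (l : List (OpA N)) (t : ℝ) : OpA N := (l.map fun x => NormedSpace.exp (t • x)).prod

/-- its derivative -/
def trD : List (OpA N) → ℝ → OpA N
  | [], _ => 0
  | x :: l, t => NormedSpace.exp (t • x) * x * trF l t + NormedSpace.exp (t • x) * trD l t

@[simp] lemma trF_nil (t : ℝ) : trF ([] : List (OpA N)) t = 1 := rfl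
lemma trF_cons (x : OpA N) (l : List (OpA N)) (t : ℝ) :
    trF (x :: l) t = NormedSpace.exp (t • x) * trF l t := by simp [trF]

lemma trF_hasDerivAt (l : List (OpA N)) (t : ℝ) :
    HasDerivAt (fun t => trF l t) (trD l t) t := by
  induction l with
  | nil => simpa [trD] using (hasDerivAt_const t (1 : OpA N))
  | cons x l ih =>
      have h := (hasDerivAt_exp_smul_const (𝕂 := ℝ) x t).mul ih
      simp only [trF_cons, trD]; exact h

lemma continuous_exp_smul (x : OpA N) : Continuous fun t : ℝ => NormedSpace.exp (t • x) :=
  continuous_iff_continuousAt.2 fun t => (hasDerivAt_exp_smul_const (𝕂 := ℝ) x t).continuousAt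

lemma trF_continuous (l : List (OpA N)) : Continuous fun t => trF l t := by
  induction l with
  | nil => simpa using continuous_const
  | cons x l ih => simp only [trF_cons]; exact (continuous_exp_smul x).mul ih

lemma trD_continuous (l : List (OpA N)) : Continuous fun t => trD l t := by
  induction l with
  | nil => simpa [trD] using continuous_const
  | cons x l ih =>
      simp only [trD]
      exact (((continuous_exp_smul x).mul continuous_const).mul (trF_continuous l)).add
        ((continuous_exp_smul x).mul ih)

lemma trF_norm_le (l : List (OpA N)) (h : ∀ x ∈ l, star x = -x) (t : ℝ) : ‖trF l t‖ ≤ 1 := by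
  induction l with
  | nil => simpa using (by exact ContinuousLinearMap.norm_id_le : ‖(1 : OpA N)‖ ≤ 1)
  | cons x l ih =>
      rw [trF_cons]
      calc ‖NormedSpace.exp (t • x) * trF l t‖ ≤ ‖NormedSpace.exp (t • x)‖ * ‖trF l t‖ := norm_mul_le _ _
        _ ≤ 1 * 1 := by
            have h1 := exp_skew_norm_le x (h x (List.mem_cons_self)) t
            have h2 := ih fun y hy => h y (List.mem_cons_of_mem x hy)
            exact mul_le_mul h1 h2 (norm_nonneg _) zero_le_one
        _ = 1 := one_mul 1

lemma comm_list_sum_le (e : OpA N) (l : List (OpA N)) :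
    ‖e * l.sum - l.sum * e‖ ≤ (l.map fun y => ‖e * y - y * e‖).sum := by
  induction l with
  | nil => simp
  | cons x l ih =>
      have : e * (x :: l).sum - (x :: l).sum * e
          = (e * x - x * e) + (e * l.sum - l.sum * e) := by
        rw [List.sum_cons]; noncomm_ring
      rw [this, List.map_cons, List.sum_cons]
      exact (norm_add_le _ _).trans (by gcongr)

lemma exp_mul_exp_neg (x : OpA N) (t : ℝ) : NormedSpace.exp (t • x) * NormedSpace.exp (t • -x) = 1 := by
  rw [show t • -x = -(t • x) from smul_neg t x,
    show NormedSpace.exp (t • x) * NormedSpace.exp (-(t • x)) = NormedSpace.exp (t • x + -(t • x)) from (NormedSpace.exp_add_of_commute_of_mem_ball (𝕂 := ℝ) (Commute.neg_right (Commute.refl (t • x))) ((NormedSpace.expSeries_radius_eq_top ℝ (OpA N)).symm ▸ edist_lt_top _ _) ((NormedSpace.expSeries_radius_eq_top ℝ (OpA N)).symm ▸ edist_lt_top _ _)).symm]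
  simp [NormedSpace.exp_zero]

lemma comm_exp_le (x y : OpA N) (hx : star x = -x) (t : ℝ) :
    ‖NormedSpace.exp (t • x) * y - y * NormedSpace.exp (t • x)‖ ≤ |t| * ‖x * y - y * x‖ := by
  set f : ℝ → OpA N := fun s => NormedSpace.exp (s • -x) * y * NormedSpace.exp (s • x) with hf
  set f' : ℝ → OpA N := fun s => NormedSpace.exp (s • -x) * (y * x - x * y) * NormedSpace.exp (s • x) with hf'
  have hder : ∀ s : ℝ, HasDerivAt f (f' s) s := by
    intro s
    have h := ((hasDerivAt_exp_smul_const (𝕂 := ℝ) (-x) s).mul (hasDerivAt_const s y)).mul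
      (hasDerivAt_exp_smul_const (𝕂 := ℝ) x s)
    have hc : NormedSpace.exp (s • x) * x = x * NormedSpace.exp (s • x) :=
      ((((Commute.refl x).smul_left s).exp_left).symm.eq).symm
    refine h.congr_deriv (Eq.symm ?_)
    rw [hf']
    simp only [Pi.mul_apply]
    rw [hc]
    noncomm_ring
  have hint : IntervalIntegrable f' MeasureTheory.volume 0 t := by
    apply Continuous.intervalIntegrable
    exact ((continuous_exp_smul (-x)).mul continuous_const).mul (continuous_exp_smul x)
  have hftc : ∫ s in (0:ℝ)..t, f' s = f t - f 0 :=
    intervalIntegral.integral_eq_sub_of_hasDerivAt (fun s _ => hder s) hint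
  have hbound : ‖f t - f 0‖ ≤ ‖x * y - y * x‖ * |t| := by
    rw [← hftc]
    have := intervalIntegral.norm_integral_le_of_norm_le_const (a := 0) (b := t)
      (C := ‖x * y - y * x‖) (f := f') ?_
    · simpa using this
    · intro s _
      calc ‖f' s‖ ≤ ‖NormedSpace.exp (s • -x) * (y * x - x * y)‖ * ‖NormedSpace.exp (s • x)‖ := norm_mul_le _ _
        _ ≤ ‖NormedSpace.exp (s • -x)‖ * ‖y * x - x * y‖ * ‖NormedSpace.exp (s • x)‖ := by
            gcongr; exact norm_mul_le _ _
        _ ≤ 1 * ‖y * x - x * y‖ * 1 := by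
            gcongr
            · exact exp_skew_norm_le (-x) ((star_neg x).trans (by rw [hx])) s
            · exact exp_skew_norm_le x hx s
        _ = ‖x * y - y * x‖ := by rw [one_mul, mul_one, ← norm_neg]; congr 1; noncomm_ring
  have hkey : NormedSpace.exp (t • x) * y - y * NormedSpace.exp (t • x) = NormedSpace.exp (t • x) * (f 0 - f t) := by
    rw [hf]
    have h0 : ∀ z : OpA N, (0:ℝ) • z = 0 := fun z => zero_smul ℝ z
    simp only [h0, NormedSpace.exp_zero, one_mul, mul_one]
    rw [mul_sub, ← mul_assoc, ← mul_assoc, exp_mul_exp_neg x t, one_mul]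
  rw [hkey]
  calc ‖NormedSpace.exp (t • x) * (f 0 - f t)‖ ≤ ‖NormedSpace.exp (t • x)‖ * ‖f 0 - f t‖ := norm_mul_le _ _
    _ ≤ 1 * (‖x * y - y * x‖ * |t|) := by
        gcongr
        · exact exp_skew_norm_le x hx t
        · rw [norm_sub_rev]; exact hbound
    _ = |t| * ‖x * y - y * x‖ := by ring

def pairCS : List (OpA N) → ℝ
  | [] => 0
  | x :: l => (l.map fun y => ‖x * y - y * x‖).sum + pairCS l

lemma pairCS_cons (a : OpA N) (l : List (OpA N)) :
    pairCS (a :: l) = (l.map fun y => ‖a * y - y * a‖).sum + pairCS l := rfl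

lemma pairCS_nonneg (l : List (OpA N)) : 0 ≤ pairCS l := by
  induction l with
  | nil => simp [pairCS]
  | cons x l ih =>
      have : 0 ≤ (l.map fun y => ‖x * y - y * x‖).sum :=
        List.sum_nonneg (by intro a ha; simp only [List.mem_map] at ha
                            obtain ⟨y, _, rfl⟩ := ha; exact norm_nonneg _)
      simp only [pairCS]; linarith

lemma key_bound (l : List (OpA N)) (h : ∀ x ∈ l, star x = -x) (t : ℝ) :
    ‖trD l t - l.sum * trF l t‖ ≤ |t| * pairCS l := by
  induction l with
  | nil => simp [trD, pairCS]
  | cons x l ih =>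
      have hx : star x = -x := h x (List.mem_cons_self)
      have hl : ∀ y ∈ l, star y = -y := fun y hy => h y (List.mem_cons_of_mem x hy)
      have hxe : x * NormedSpace.exp (t • x) = NormedSpace.exp (t • x) * x :=
        (((Commute.refl x).smul_left t).exp_left).symm.eq
      have hsplit : trD (x :: l) t - (x :: l).sum * trF (x :: l) t
          = NormedSpace.exp (t • x) * (trD l t - l.sum * trF l t)
            + (NormedSpace.exp (t • x) * l.sum - l.sum * NormedSpace.exp (t • x)) * trF l t := by
        rw [trF_cons, List.sum_cons]
        show NormedSpace.exp (t • x) * x * trF l t + NormedSpace.exp (t • x) * trD l t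
            - (x + l.sum) * (NormedSpace.exp (t • x) * trF l t) = _
        have hexp : (x + l.sum) * (NormedSpace.exp (t • x) * trF l t)
            = NormedSpace.exp (t • x) * (x * trF l t) + l.sum * (NormedSpace.exp (t • x) * trF l t) := by
          rw [add_mul, ← mul_assoc, hxe, mul_assoc]
        rw [hexp]
        simp only [mul_sub, sub_mul, ← mul_assoc]
        abel
      rw [hsplit]
      have h1 : ‖NormedSpace.exp (t • x) * (trD l t - l.sum * trF l t)‖ ≤ |t| * pairCS l := by
        calc ‖NormedSpace.exp (t • x) * (trD l t - l.sum * trF l t)‖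
            ≤ ‖NormedSpace.exp (t • x)‖ * ‖trD l t - l.sum * trF l t‖ := norm_mul_le _ _
          _ ≤ 1 * (|t| * pairCS l) := mul_le_mul (exp_skew_norm_le x hx t) (ih hl)
              (norm_nonneg _) zero_le_one
          _ = |t| * pairCS l := one_mul _
      have h2 : ‖(NormedSpace.exp (t • x) * l.sum - l.sum * NormedSpace.exp (t • x)) * trF l t‖
          ≤ |t| * (l.map fun y => ‖x * y - y * x‖).sum := by
        calc ‖(NormedSpace.exp (t • x) * l.sum - l.sum * NormedSpace.exp (t • x)) * trF l t‖
            ≤ ‖NormedSpace.exp (t • x) * l.sum - l.sum * NormedSpace.exp (t • x)‖ * ‖trF l t‖ := norm_mul_le _ _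
          _ ≤ ‖NormedSpace.exp (t • x) * l.sum - l.sum * NormedSpace.exp (t • x)‖ * 1 :=
              mul_le_mul_of_nonneg_left (trF_norm_le l hl t) (norm_nonneg _)
          _ = ‖NormedSpace.exp (t • x) * l.sum - l.sum * NormedSpace.exp (t • x)‖ := mul_one _
          _ ≤ (l.map fun y => ‖NormedSpace.exp (t • x) * y - y * NormedSpace.exp (t • x)‖).sum :=
              comm_list_sum_le _ l
          _ ≤ (l.map fun y => |t| * ‖x * y - y * x‖).sum :=
              List.sum_le_sum fun y hy => comm_exp_le x y hx t
          _ = |t| * (l.map fun y => ‖x * y - y * x‖).sum := List.sum_map_mul_left l _ _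
      calc ‖_ + _‖ ≤ _ + _ := norm_add_le _ _
        _ ≤ |t| * pairCS l + |t| * (l.map fun y => ‖x * y - y * x‖).sum := add_le_add h1 h2
        _ = |t| * pairCS (x :: l) := by rw [pairCS]; ring


lemma star_list_sum (l : List (OpA N)) (h : ∀ x ∈ l, star x = -x) : star l.sum = -l.sum := by
  induction l with
  | nil => exact (star_zero (OpA N)).trans neg_zero.symm
  | cons a l ih =>
      rw [List.sum_cons, show star (a + l.sum) = star a + star l.sum from star_add a l.sum, h a (List.mem_cons_self),
        ih (fun y hy => h y (List.mem_cons_of_mem a hy)), neg_add]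

lemma trF_zero (l : List (OpA N)) : trF l 0 = 1 := by
  induction l with
  | nil => simp
  | cons x l ih =>
      rw [trF_cons, show ((0:ℝ) • x : OpA N) = 0 from zero_smul ℝ x, NormedSpace.exp_zero, one_mul, ih]

lemma trotter_list_nonneg (l : List (OpA N)) (h : ∀ x ∈ l, star x = -x) (τ : ℝ) (hτ : 0 ≤ τ) :
    ‖NormedSpace.exp (τ • l.sum) - trF l τ‖ ≤ τ ^ 2 / 2 * pairCS l := by
  have hs : star l.sum = -l.sum := star_list_sum l h
  set g : ℝ → OpA N := fun t => NormedSpace.exp ((τ - t) • l.sum) * trF l t with hg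
  set g' : ℝ → OpA N := fun t => NormedSpace.exp ((τ - t) • l.sum) * (trD l t - l.sum * trF l t) with hg'
  have hder : ∀ t : ℝ, HasDerivAt g (g' t) t := by
    intro t
    have hin : HasDerivAt (fun t : ℝ => τ - t) (-1 : ℝ) t := by
      simpa using (hasDerivAt_id t).const_sub τ
    have h1 : HasDerivAt (fun t : ℝ => NormedSpace.exp ((τ - t) • l.sum))
        ((-1 : ℝ) • (NormedSpace.exp ((τ - t) • l.sum) * l.sum)) t :=
      (hasDerivAt_exp_smul_const (𝕂 := ℝ) l.sum (τ - t)).scomp t hin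
    have h2 := h1.mul (trF_hasDerivAt l t)
    refine h2.congr_deriv (Eq.symm ?_)
    rw [hg']
    simp only [mul_sub, mul_assoc, smul_eq_mul, smul_smul, neg_one_smul, neg_mul,
      smul_mul_assoc, mul_one, one_mul, one_smul]
    abel_nf
    simp
    exact (neg_one_smul ℝ (NormedSpace.exp ((τ + -t) • l.sum) * (l.sum * trF l t))).symm
  have hcont : Continuous g' :=
    (((continuous_exp_smul l.sum).comp (continuous_const.sub continuous_id)).mul ((trD_continuous l).sub (continuous_const.mul (trF_continuous l))))
  have hftc : ∫ t in (0:ℝ)..τ, g' t = g τ - g 0 :=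
    intervalIntegral.integral_eq_sub_of_hasDerivAt (fun t _ => hder t)
      (hcont.intervalIntegrable 0 τ)
  have hg0 : g 0 = NormedSpace.exp (τ • l.sum) := by
    rw [hg]; simp only [sub_zero, trF_zero, mul_one]
  have hgτ : g τ = trF l τ := by
    rw [hg]; simp only [sub_self,
      show ((0:ℝ) • l.sum : OpA N) = 0 from zero_smul ℝ l.sum, NormedSpace.exp_zero, one_mul]
  have hnorm : ‖NormedSpace.exp (τ • l.sum) - trF l τ‖ = ‖∫ t in (0:ℝ)..τ, g' t‖ := by
    rw [hftc, hg0, hgτ, norm_sub_rev]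
  rw [hnorm]
  have hbound : ∀ t ∈ Set.Icc (0:ℝ) τ, ‖g' t‖ ≤ t * pairCS l := by
    intro t ht
    calc ‖g' t‖ ≤ ‖NormedSpace.exp ((τ - t) • l.sum)‖ * ‖trD l t - l.sum * trF l t‖ := norm_mul_le _ _
      _ ≤ 1 * (|t| * pairCS l) :=
          mul_le_mul (exp_skew_norm_le l.sum hs (τ - t)) (key_bound l h t)
            (norm_nonneg _) zero_le_one
      _ = t * pairCS l := by rw [one_mul, _root_.abs_of_nonneg ht.1]
  calc ‖∫ t in (0:ℝ)..τ, g' t‖ ≤ ∫ t in (0:ℝ)..τ, ‖g' t‖ :=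
        intervalIntegral.norm_integral_le_integral_norm hτ
    _ ≤ ∫ t in (0:ℝ)..τ, t * pairCS l :=
        intervalIntegral.integral_mono_on hτ
          (hcont.norm.intervalIntegrable 0 τ)
          ((continuous_id.mul continuous_const).intervalIntegrable 0 τ) hbound
    _ = τ ^ 2 / 2 * pairCS l := by
        rw [intervalIntegral.integral_mul_const, integral_id]; ring

lemma pairCS_neg (l : List (OpA N)) : pairCS (l.map fun x => -x) = pairCS l := by
  induction l with
  | nil => simp [pairCS]
  | cons x l ih =>
      simp only [List.map_cons, pairCS, List.map_map, ih]
      congr 1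
      apply congrArg
      apply List.map_congr_left
      intro y _
      simp only [Function.comp_apply]
      congr 1
      ext v
      simp

lemma sum_map_neg' (l : List (OpA N)) : (l.map fun x => -x).sum = -l.sum := by
  induction l with
  | nil => simp
  | cons x l ih => simp [ih]; abel

lemma neg_smul_neg' (t : ℝ) (x : OpA N) : (-t) • -x = t • x := by ext v; simp

lemma trotter_list (l : List (OpA N)) (h : ∀ x ∈ l, star x = -x) (τ : ℝ) :
    ‖NormedSpace.exp (τ • l.sum) - trF l τ‖ ≤ τ ^ 2 / 2 * pairCS l := by
  rcases le_or_gt 0 τ with hτ | hτ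
  · exact trotter_list_nonneg l h τ hτ
  · have h' : ∀ x ∈ l.map fun x => -x, star x = -x := by
      intro x hx
      simp only [List.mem_map] at hx
      obtain ⟨y, hy, rfl⟩ := hx
      exact (star_neg y).trans (by rw [h y hy])
    have := trotter_list_nonneg (l.map fun x => -x) h' (-τ) (by linarith)
    rw [sum_map_neg', pairCS_neg] at this
    have e1 : (-τ) • (-l.sum) = τ • l.sum := neg_smul_neg' τ l.sum
    have e2 : trF (l.map fun x => -x) (-τ) = trF l τ := by
      rw [trF, trF, List.map_map]
      congr 1
      apply List.map_congr_left
      intro y _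
      simp only [Function.comp_apply]
      rw [neg_smul_neg' τ y]
    rw [e1, e2, neg_pow] at this
    simpa using this

lemma pairCS_finRange (m : ℕ) (x : Fin m → OpA N) :
    pairCS ((List.finRange m).map x) = ∑ j, ∑ j' ∈ Finset.Ioi j, ‖x j * x j' - x j' * x j‖ := by
  induction m with
  | zero => simp [pairCS]
  | succ m ih =>
      rw [List.finRange_succ, List.map_cons, List.map_map, pairCS_cons, List.map_map,
        ih (x ∘ Fin.succ), Fin.sum_univ_succ]
      congr 1
      · rw [Fin.sum_Ioi_zero, Fin.sum_univ_def]
        rfl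
      · apply Finset.sum_congr rfl
        intro j _
        rw [Fin.sum_Ioi_succ]
        rfl

end

open NormedSpace in
/-- first-order Lie–Trotter commutator error bound:
`‖exp(−i(ΣH_j)τ) − ∏_j exp(−iH_jτ)‖ ≤ (τ²/2)·Σ_{j<j'} ‖[H_j, H_{j'}]‖`. -/
theorem trotter_first_order (N m : ℕ) (H : Fin m → Matrix (Fin N) (Fin N) ℂ)
    (hH : ∀ j, (H j).IsHermitian) (τ : ℝ) :
    specNorm (NormedSpace.exp (((-Complex.I) * (τ : ℂ)) • ∑ j, H j) -
        ((List.finRange m).map fun j =>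
          NormedSpace.exp (((-Complex.I) * (τ : ℂ)) • H j)).prod) ≤
      τ ^ 2 / 2 * ∑ j, ∑ j' ∈ Finset.Ioi j, specNorm (H j * H j' - H j' * H j) := by
  set f := Matrix.toEuclideanCLM (𝕜 := ℂ) (n := Fin N) with hfdef
  have hf : Continuous ⇑f := by
    let g : Matrix (Fin N) (Fin N) ℂ →ₗ[ℂ] OpA N :=
      { toFun := ⇑f, map_add' := _root_.map_add f, map_smul' := _root_.map_smul f }
    exact g.continuous_of_finiteDimensional
  let le : Matrix (Fin N) (Fin N) ℂ ≃ₗ[ℂ] OpA N :=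
    { toFun := ⇑f, invFun := ⇑f.symm, map_add' := _root_.map_add f, map_smul' := _root_.map_smul f,
      left_inv := fun z => f.symm_apply_apply z, right_inv := fun z => f.apply_symm_apply z }
  let e : Matrix (Fin N) (Fin N) ℂ ≃L[ℂ] OpA N := le.toContinuousLinearEquiv
  have hmapexp : ∀ M : Matrix (Fin N) (Fin N) ℂ,
      f (NormedSpace.exp M) = NormedSpace.exp (f M) := by
    intro M
    rw [NormedSpace.exp_eq_tsum ℂ, NormedSpace.exp_eq_tsum ℂ]
    calc f (∑' n : ℕ, ((n.factorial : ℂ))⁻¹ • M ^ n)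
        = ∑' n : ℕ, f (((n.factorial : ℂ))⁻¹ • M ^ n) := e.map_tsum
      _ = ∑' n : ℕ, ((n.factorial : ℂ))⁻¹ • (f M) ^ n := by
          congr 1; funext n; rw [_root_.map_smul, _root_.map_pow]
  set x : Fin m → OpA N := fun j => f ((-Complex.I) • H j) with hx
  set l : List (OpA N) := (List.finRange m).map x with hl
  -- basic smul identity
  have hsm : ∀ (M : Matrix (Fin N) (Fin N) ℂ), τ • f ((-Complex.I) • M)
      = f (((-Complex.I) * (τ : ℂ)) • M) := by
    intro M
    rw [← coe_real_smul, ← _root_.map_smul f, smul_smul, mul_comm]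
  -- skewness
  have hskew : ∀ z ∈ l, star z = -z := by
    intro z hz
    rw [hl] at hz
    simp only [List.mem_map] at hz
    obtain ⟨j, _, rfl⟩ := hz
    rw [hx]
    show star (f ((-Complex.I) • H j)) = -f ((-Complex.I) • H j)
    rw [← map_star, ← _root_.map_neg]
    congr 1
    rw [star_smul, Matrix.star_eq_conjTranspose, (hH j).eq]
    simp only [star_neg, Complex.star_def, Complex.conj_I, neg_neg]
    rw [show -((-Complex.I) • H j) = Complex.I • H j by rw [neg_smul, neg_neg]]
  -- sum identification
  have hsum : τ • l.sum = f (((-Complex.I) * (τ : ℂ)) • ∑ j, H j) := by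
    rw [hl, ← Fin.sum_univ_def, hx]
    have : ∑ j, f ((-Complex.I) • H j) = f ((-Complex.I) • ∑ j, H j) := by
      rw [← _root_.map_sum, ← Finset.smul_sum]
    rw [this, hsm]
  -- LHS identification
  have hexp1 : f (NormedSpace.exp (((-Complex.I) * (τ : ℂ)) • ∑ j, H j))
      = NormedSpace.exp (τ • l.sum) := by
    rw [hmapexp, hsum]
  have hexp2 : f (((List.finRange m).map fun j =>
      NormedSpace.exp (((-Complex.I) * (τ : ℂ)) • H j)).prod) = trF l τ := by
    rw [_root_.map_list_prod, List.map_map, trF, hl, List.map_map]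
    congr 1
    apply List.map_congr_left
    intro j _
    simp only [Function.comp_apply]
    rw [hmapexp]
    congr 1
    exact (hsm (H j)).symm
  -- RHS identification
  have hRHS : pairCS l = ∑ j, ∑ j' ∈ Finset.Ioi j, specNorm (H j * H j' - H j' * H j) := by
    rw [hl, pairCS_finRange]
    apply Finset.sum_congr rfl
    intro j _
    apply Finset.sum_congr rfl
    intro j' _
    rw [hx]
    show ‖f ((-Complex.I) • H j) * f ((-Complex.I) • H j')
        - f ((-Complex.I) • H j') * f ((-Complex.I) • H j)‖ = _
    rw [← _root_.map_mul, ← _root_.map_mul, ← _root_.map_sub]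
    have : ((-Complex.I) • H j) * ((-Complex.I) • H j')
        - ((-Complex.I) • H j') * ((-Complex.I) • H j)
        = -(H j * H j' - H j' * H j) := by
      rw [smul_mul_smul_comm, smul_mul_smul_comm]
      have : (-Complex.I) * (-Complex.I) = -1 := by
        simp [Complex.I_mul_I]
      rw [this, neg_one_smul, neg_one_smul, neg_sub_neg, ← neg_sub]
    rw [this, _root_.map_neg, norm_neg]
    rfl
  -- conclude
  have key := trotter_list l hskew τ
  rw [hRHS] at key
  calc specNorm (NormedSpace.exp (((-Complex.I) * (τ : ℂ)) • ∑ j, H j) -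
        ((List.finRange m).map fun j =>
          NormedSpace.exp (((-Complex.I) * (τ : ℂ)) • H j)).prod)
      = ‖f (NormedSpace.exp (((-Complex.I) * (τ : ℂ)) • ∑ j, H j)) -
          f (((List.finRange m).map fun j =>
            NormedSpace.exp (((-Complex.I) * (τ : ℂ)) • H j)).prod)‖ := by
        rw [← _root_.map_sub]; rfl
    _ = ‖NormedSpace.exp (τ • l.sum) - trF l τ‖ := by rw [hexp1, hexp2]
    _ ≤ _ := key

end
end
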